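/- Let B be an essentially small additive category, M an object of Kar(B), and suppose there exist objects N₁, N₂ of B and an object B₀ of Kar(B) with M ⊕ B₀ ⊕ N₂ ≅ N₁ ⊕ B₀ in Kar(B). Then there exists an object B' of B with M ⊕ B' ⊕ N₂ ≅ N₁ ⊕ B'' in Kar(B) for some object B'' of B; consequently M lies in wkar(B). -/

import Mathlib

open CategoryTheory CategoryTheory.Limits CategoryTheory.Idempotents

universe v u

variable (B : Type u) [Category.{v} B] [Preadditive B] [HasFiniteBiproducts B]

noncomputable instance : HasBinaryBiproducts (Karoubi B) :=
  hasBinaryBiproducts_of_finite_biproducts _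

/-- Objects of the weak idempotent completion `wkar(B)` inside `Kar(B)`:
those `Z` with `X ⊞ Z ≅ Y` for some `X`, `Y` coming from `B`. -/
def wkarPred (Z : Karoubi B) : Prop :=
  ∃ X Y : B, Nonempty ((toKaroubi B).obj X ⊞ Z ≅ (toKaroubi B).obj Y)

section BiprodIso

variable {C : Type*} [Category C] [HasZeroMorphisms C] [HasBinaryBiproducts C]

noncomputable def biprodRotateIso (A X N : C) : A ⊞ X ⊞ N ≅ (A ⊞ N) ⊞ X :=
  biprod.mapIso (Iso.refl A) (biprod.braiding X N) ≪≫ (biprod.associator A N X).symm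

noncomputable def biprodIsoOfSummand {A A' X Y Z : C} (e : A ⊞ X ≅ A' ⊞ X) (d : X ⊞ Y ≅ Z) :
    A ⊞ Z ≅ A' ⊞ Z :=
  biprod.mapIso (Iso.refl A) d.symm ≪≫ (biprod.associator A X Y).symm ≪≫
    biprod.mapIso e (Iso.refl Y) ≪≫ biprod.associator A' X Y ≪≫ biprod.mapIso (Iso.refl A') d

end BiprodIso

section

variable {B}

theorem wkarPred_of_iso {M : Karoubi B} {X Y : B}
    (e : M ⊞ (toKaroubi B).obj X ≅ (toKaroubi B).obj Y) : wkarPred B M :=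
  ⟨X, Y, ⟨biprod.braiding _ _ ≪≫ e⟩⟩

end

theorem cancel_retract_mem_wkar
    (M B₀ : Karoubi B) (N₁ N₂ : B)
    (h : Nonempty (M ⊞ B₀ ⊞ (toKaroubi B).obj N₂ ≅ (toKaroubi B).obj N₁ ⊞ B₀)) :
    (∃ B' B'' : B,
      Nonempty (M ⊞ (toKaroubi B).obj B' ⊞ (toKaroubi B).obj N₂ ≅
        (toKaroubi B).obj N₁ ⊞ (toKaroubi B).obj B'')) ∧
    wkarPred B M := by
  obtain ⟨e⟩ := h
  -- `B₀` is a summand of `B₀.X`, so it can be enlarged to an object of `B` on both sides.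
  let e' : M ⊞ (toKaroubi B).obj B₀.X ⊞ (toKaroubi B).obj N₂ ≅
      (toKaroubi B).obj N₁ ⊞ (toKaroubi B).obj B₀.X :=
    biprodRotateIso _ _ _ ≪≫
      biprodIsoOfSummand ((biprodRotateIso _ _ _).symm ≪≫ e) B₀.decomposition
  refine ⟨⟨B₀.X, B₀.X, ⟨e'⟩⟩, ?_⟩
  have : HasBinaryBiproducts B := hasBinaryBiproducts_of_finite_biproducts _
  have : PreservesBinaryBiproducts (toKaroubi B) :=
    preservesBinaryBiproducts_of_preservesBiproducts _
  exact wkarPred_of_iso (biprod.mapIso (Iso.refl M) ((toKaroubi B).mapBiprod _ _) ≪≫ e' ≪≫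
    ((toKaroubi B).mapBiprod _ _).symm)
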